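/- arXiv:2503.09107 — 2 statements merged into one kernel-verified Lean document; each statement's English description precedes it below -/
import Mathlib

section
/- The metric space (𝒵, d) with d(f,g) := ‖f − g‖_𝒵 is complete: every Cauchy sequence in 𝒵 with respect to ‖·‖_𝒵 converges in ‖·‖_𝒵 to an element of 𝒵. -/
open MeasureTheory
open scoped ENNReal NNReal

/-- Lebesgue measure restricted to `I = [0,1]`. -/
noncomputable def mu01 : Measure ℝ := volume.restrict (Set.Icc (0:ℝ) 1)

/-- The norm `‖f‖_𝒵 := sup_{t ∈ [0,T]} ∫_I |f(t)(x)| dx`, where `|·|` is the 1-norm on `ℝ²`. -/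
noncomputable def Znorm (T : ℝ) (f : ℝ → Lp (ℝ × ℝ) 2 mu01) : ℝ :=
  ⨆ t : Set.Icc (0:ℝ) T, ∫ x, (|(f t.1 x).1| + |(f t.1 x).2|) ∂mu01

/-- Membership in `𝒵`: `f : [0,T] → L²(I; ℝ×ℝ)` is continuous and for every `t ∈ [0,T]` and
almost every `x ∈ I` both coordinates of `f(t)(x)` are bounded in absolute value by `Ā`. -/
def memZ (T Abar : ℝ) (f : ℝ → Lp (ℝ × ℝ) 2 mu01) : Prop :=
  ContinuousOn f (Set.Icc 0 T) ∧
    ∀ t ∈ Set.Icc (0:ℝ) T, ∀ᵐ x ∂mu01, |(f t x).1| ≤ Abar ∧ |(f t x).2| ≤ Abar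

instance mu01_prob : IsProbabilityMeasure mu01 := by
  constructor
  rw [mu01, Measure.restrict_apply_univ, Real.volume_Icc]
  norm_num

noncomputable def J (g : Lp (ℝ × ℝ) 2 mu01) : ℝ := ∫ x, (|(g x).1| + |(g x).2|) ∂mu01

lemma J_asm (g : Lp (ℝ × ℝ) 2 mu01) :
    AEStronglyMeasurable (fun x => |(g x).1| + |(g x).2|) mu01 := by
  have h := (Lp.aestronglyMeasurable g)
  exact ((continuous_abs.comp continuous_fst).add
    (continuous_abs.comp continuous_snd)).comp_aestronglyMeasurable h

lemma g_int (g : Lp (ℝ × ℝ) 2 mu01) : Integrable (fun x => (g : ℝ → ℝ × ℝ) x) mu01 := by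
  have := Lp.memLp g
  exact memLp_one_iff_integrable.mp (this.mono_exponent (by norm_num))

lemma J_int (g : Lp (ℝ × ℝ) 2 mu01) :
    Integrable (fun x => |(g x).1| + |(g x).2|) mu01 := by
  refine Integrable.mono' ((g_int g).norm.const_mul 2) (J_asm g) ?_
  filter_upwards with x
  have h1 : |(g x).1| ≤ ‖g x‖ := (Real.norm_eq_abs _) ▸ norm_fst_le (g x)
  have h2 : |(g x).2| ≤ ‖g x‖ := (Real.norm_eq_abs _) ▸ norm_snd_le (g x)
  rw [Real.norm_eq_abs, abs_of_nonneg (by positivity)]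
  linarith

lemma J_nonneg (g : Lp (ℝ × ℝ) 2 mu01) : 0 ≤ J g :=
  integral_nonneg fun x => by positivity

lemma J_le_two_norm (g : Lp (ℝ × ℝ) 2 mu01) : J g ≤ 2 * ‖g‖ := by
  have h1 : J g ≤ ∫ x, 2 * ‖(g : ℝ → ℝ × ℝ) x‖ ∂mu01 := by
    refine integral_mono (J_int g) ((g_int g).norm.const_mul 2) fun x => ?_
    have h1 : |(g x).1| ≤ ‖g x‖ := (Real.norm_eq_abs _) ▸ norm_fst_le (g x)
    have h2 : |(g x).2| ≤ ‖g x‖ := (Real.norm_eq_abs _) ▸ norm_snd_le (g x)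
    simp only
    linarith
  have h2 : ∫ x, ‖(g : ℝ → ℝ × ℝ) x‖ ∂mu01 = (eLpNorm (⇑g) 1 mu01).toReal := by
    rw [integral_norm_eq_lintegral_enorm (Lp.aestronglyMeasurable g),
      eLpNorm_one_eq_lintegral_enorm]
  have h3 : eLpNorm (⇑g) 1 mu01 ≤ eLpNorm (⇑g) 2 mu01 :=
    eLpNorm_le_eLpNorm_of_exponent_le (by norm_num) (Lp.aestronglyMeasurable g)
  have h4 : (eLpNorm (⇑g) 1 mu01).toReal ≤ ‖g‖ := by
    rw [Lp.norm_def]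
    exact ENNReal.toReal_mono (Lp.eLpNorm_ne_top g) h3
  rw [integral_const_mul] at h1
  linarith

lemma norm_sq_le_J (g : Lp (ℝ × ℝ) 2 mu01) (C : ℝ) (hC : 0 ≤ C)
    (hg : ∀ᵐ x ∂mu01, |(g x).1| ≤ C ∧ |(g x).2| ≤ C) :
    ‖g‖ ^ 2 ≤ C * J g := by
  set L : ℝ≥0∞ := ∫⁻ x, (‖(g : ℝ → ℝ × ℝ) x‖₊ : ℝ≥0∞) ^ (2:ℕ) ∂mu01 with hLdef
  have hnorm : ‖g‖ = L.toReal ^ (1/2 : ℝ) := by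
    rw [Lp.norm_def, eLpNorm_eq_lintegral_rpow_enorm_toReal (by norm_num) (by norm_num),
      ← ENNReal.toReal_rpow]
    norm_num [hLdef, enorm_eq_nnnorm]
  have hofr : ENNReal.ofReal (∫ x, C * (|(g x).1| + |(g x).2|) ∂mu01)
      = ∫⁻ x, ENNReal.ofReal (C * (|(g x).1| + |(g x).2|)) ∂mu01 :=
    ofReal_integral_eq_lintegral_ofReal ((J_int g).const_mul C)
      (Filter.Eventually.of_forall fun x => by positivity)
  have hLle : L ≤ ENNReal.ofReal (C * J g) := by
    calc L ≤ ∫⁻ x, ENNReal.ofReal (C * (|(g x).1| + |(g x).2|)) ∂mu01 := by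
          refine lintegral_mono_ae (hg.mono fun x hx => ?_)
          have hb : ‖g x‖ ≤ C := by
            rw [Prod.norm_def]
            exact max_le ((Real.norm_eq_abs _) ▸ hx.1) ((Real.norm_eq_abs _) ▸ hx.2)
          have hsum : ‖g x‖ ≤ |(g x).1| + |(g x).2| := by
            rw [Prod.norm_def, Real.norm_eq_abs, Real.norm_eq_abs]
            exact max_le (le_add_of_nonneg_right (abs_nonneg _))
              (le_add_of_nonneg_left (abs_nonneg _))
          have hkey : ‖g x‖ ^ 2 ≤ C * (|(g x).1| + |(g x).2|) := by
            nlinarith [norm_nonneg (g x)]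
          calc (‖g x‖₊ : ℝ≥0∞) ^ (2:ℕ) = ENNReal.ofReal (‖g x‖ ^ 2) := by
                rw [← enorm_eq_nnnorm, ← ofReal_norm, ← ENNReal.ofReal_pow (norm_nonneg _)]
            _ ≤ _ := ENNReal.ofReal_le_ofReal hkey
      _ = ENNReal.ofReal (C * J g) := by
          rw [hofr.symm, J, ← integral_const_mul]
  have hL2 : ‖g‖ ^ 2 = L.toReal := by
    rw [hnorm, ← Real.rpow_natCast (L.toReal ^ (1/2:ℝ)) 2, ← Real.rpow_mul ENNReal.toReal_nonneg]
    norm_num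
  rw [hL2]
  have := ENNReal.toReal_mono ENNReal.ofReal_ne_top hLle
  rwa [ENNReal.toReal_ofReal (mul_nonneg hC (J_nonneg g))] at this

lemma J_le_of_bound (g : Lp (ℝ × ℝ) 2 mu01) (C : ℝ)
    (h : ∀ᵐ x ∂mu01, |(g x).1| ≤ C ∧ |(g x).2| ≤ C) : J g ≤ 2 * C := by
  have := integral_mono_ae (J_int g) (integrable_const (2*C))
    (h.mono fun x hx => by simp only [Pi.add_apply]; linarith [hx.1, hx.2])
  simpa [J, measure_univ] using this

lemma Znorm_eq (T : ℝ) (f : ℝ → Lp (ℝ × ℝ) 2 mu01) :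
    Znorm T f = ⨆ t : Set.Icc (0:ℝ) T, J (f t.1) := rfl

/-- `(𝒵, ‖·‖_𝒵)` is complete: every sequence in `𝒵` that is Cauchy with respect
to `‖·‖_𝒵` converges in `‖·‖_𝒵` to an element of `𝒵`. -/
theorem Z_complete
    (T Abar : ℝ) (hT : 0 < T) (hA : 0 < Abar)
    (fn : ℕ → ℝ → Lp (ℝ × ℝ) 2 mu01)
    (hfn : ∀ n, memZ T Abar (fn n))
    (hcauchy : ∀ ε > (0:ℝ), ∃ N : ℕ, ∀ m ≥ N, ∀ n ≥ N,
      Znorm T (fun t => fn m t - fn n t) < ε) :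
    ∃ f : ℝ → Lp (ℝ × ℝ) 2 mu01, memZ T Abar f ∧
      Filter.Tendsto (fun n => Znorm T (fun t => fn n t - f t)) Filter.atTop (nhds 0) := by
  have h0T : (0:ℝ) ∈ Set.Icc (0:ℝ) T := ⟨le_refl 0, hT.le⟩
  haveI : Nonempty (Set.Icc (0:ℝ) T) := ⟨⟨0, h0T⟩⟩
  -- a.e. coordinate bounds for differences
  have hdiffbd : ∀ m n : ℕ, ∀ t ∈ Set.Icc (0:ℝ) T, ∀ᵐ x ∂mu01,
      |((fn m t - fn n t) x).1| ≤ 2*Abar ∧ |((fn m t - fn n t) x).2| ≤ 2*Abar := by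
    intro m n t ht
    filter_upwards [Lp.coeFn_sub (fn m t) (fn n t), (hfn m).2 t ht, (hfn n).2 t ht]
      with x hx ha hb
    rw [hx]
    simp only [Pi.sub_apply, Prod.fst_sub, Prod.snd_sub]
    constructor
    · calc |(fn m t x).1 - (fn n t x).1| ≤ |(fn m t x).1| + |(fn n t x).1| := abs_sub _ _
        _ ≤ 2*Abar := by linarith [ha.1, hb.1]
    · calc |(fn m t x).2 - (fn n t x).2| ≤ |(fn m t x).2| + |(fn n t x).2| := abs_sub _ _
        _ ≤ 2*Abar := by linarith [ha.2, hb.2]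
  -- each J at t is ≤ Znorm
  have hJle : ∀ m n : ℕ, ∀ t ∈ Set.Icc (0:ℝ) T,
      J (fn m t - fn n t) ≤ Znorm T (fun s => fn m s - fn n s) := by
    intro m n t ht
    rw [Znorm_eq]
    have hbdd : BddAbove (Set.range fun s : Set.Icc (0:ℝ) T => J (fn m s.1 - fn n s.1)) := by
      refine ⟨4*Abar, ?_⟩
      rintro _ ⟨s, rfl⟩
      have := J_le_of_bound _ (2*Abar) (hdiffbd m n s.1 s.2)
      linarith
    exact le_ciSup hbdd (⟨t, ht⟩ : Set.Icc (0:ℝ) T)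
  -- uniform L² Cauchy estimate
  have key : ∀ ε > (0:ℝ), ∃ N : ℕ, ∀ m ≥ N, ∀ n ≥ N, ∀ t ∈ Set.Icc (0:ℝ) T,
      ‖fn m t - fn n t‖ < ε := by
    intro ε hε
    obtain ⟨N, hN⟩ := hcauchy (ε^2 / (4*Abar)) (by positivity)
    refine ⟨N, fun m hm n hn t ht => ?_⟩
    have h1 : ‖fn m t - fn n t‖ ^ 2 ≤ (2*Abar) * J (fn m t - fn n t) :=
      norm_sq_le_J _ _ (by linarith) (hdiffbd m n t ht)
    have h2 : J (fn m t - fn n t) < ε^2 / (4*Abar) :=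
      lt_of_le_of_lt (hJle m n t ht) (hN m hm n hn)
    have h3 : ‖fn m t - fn n t‖ ^ 2 < ε ^ 2 := by
      have : (2*Abar) * J (fn m t - fn n t) < (2*Abar) * (ε^2/(4*Abar)) := by
        apply mul_lt_mul_of_pos_left h2 (by linarith)
      have heq : (2*Abar) * (ε^2/(4*Abar)) = ε^2/2 := by field_simp; ring
      nlinarith [sq_nonneg ε]
    by_contra hcon
    push_neg at hcon
    nlinarith [norm_nonneg (fn m t - fn n t)]
  -- pointwise limits
  have hcs : ∀ t ∈ Set.Icc (0:ℝ) T, CauchySeq (fun n => fn n t) := by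
    intro t ht
    rw [Metric.cauchySeq_iff]
    intro ε hε
    obtain ⟨N, hN⟩ := key ε hε
    exact ⟨N, fun m hm n hn => by
      rw [dist_eq_norm]; exact hN m hm n hn t ht⟩
  have hex : ∀ t : ℝ, ∃ L : Lp (ℝ × ℝ) 2 mu01, t ∈ Set.Icc (0:ℝ) T →
      Filter.Tendsto (fun n => fn n t) Filter.atTop (nhds L) := by
    intro t
    by_cases ht : t ∈ Set.Icc (0:ℝ) T
    · obtain ⟨L, hL⟩ := cauchySeq_tendsto_of_complete (hcs t ht)
      exact ⟨L, fun _ => hL⟩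
    · exact ⟨0, fun h => absurd h ht⟩
  choose f hf using hex
  -- uniform L² bound on the limit
  have unif : ∀ ε > (0:ℝ), ∃ N : ℕ, ∀ n ≥ N, ∀ t ∈ Set.Icc (0:ℝ) T,
      ‖fn n t - f t‖ ≤ ε := by
    intro ε hε
    obtain ⟨N, hN⟩ := key ε hε
    refine ⟨N, fun n hn t ht => ?_⟩
    have htend : Filter.Tendsto (fun m => ‖fn n t - fn m t‖) Filter.atTop
        (nhds ‖fn n t - f t‖) := (((hf t ht).const_sub _).norm)
    exact le_of_tendsto htend (Filter.eventually_atTop.2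
      ⟨N, fun m hm => (hN n hn m hm t ht).le⟩)
  -- continuity of f
  have hcont : ContinuousOn f (Set.Icc 0 T) := by
    have hu : TendstoUniformlyOn (fun n t => fn n t) f Filter.atTop (Set.Icc 0 T) := by
      rw [Metric.tendstoUniformlyOn_iff]
      intro ε hε
      obtain ⟨N, hN⟩ := unif (ε/2) (half_pos hε)
      refine Filter.eventually_atTop.2 ⟨N, fun n hn t ht => ?_⟩
      have := hN n hn t ht
      rw [dist_comm, dist_eq_norm]
      linarith
    exact hu.continuousOn (Filter.Eventually.of_forall fun n => (hfn n).1).frequently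
  -- a.e. bound for f
  have hbd : ∀ t ∈ Set.Icc (0:ℝ) T, ∀ᵐ x ∂mu01,
      |(f t x).1| ≤ Abar ∧ |(f t x).2| ≤ Abar := by
    intro t ht
    have him : TendstoInMeasure mu01 (fun n => ⇑(fn n t)) Filter.atTop ⇑(f t) :=
      tendstoInMeasure_of_tendsto_Lp (hf t ht)
    obtain ⟨ns, hmono, hae⟩ := him.exists_seq_tendsto_ae
    have hbds : ∀ᵐ x ∂mu01, ∀ i : ℕ,
        |(fn (ns i) t x).1| ≤ Abar ∧ |(fn (ns i) t x).2| ≤ Abar :=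
      ae_all_iff.2 fun i => (hfn (ns i)).2 t ht
    filter_upwards [hae, hbds] with x hx hb
    have h1 : Filter.Tendsto (fun i => (fn (ns i) t x).1) Filter.atTop (nhds (f t x).1) :=
      (continuous_fst.tendsto _).comp hx
    have h2 : Filter.Tendsto (fun i => (fn (ns i) t x).2) Filter.atTop (nhds (f t x).2) :=
      (continuous_snd.tendsto _).comp hx
    constructor
    · exact le_of_tendsto h1.abs (Filter.Eventually.of_forall fun i => (hb i).1)
    · exact le_of_tendsto h2.abs (Filter.Eventually.of_forall fun i => (hb i).2)
  refine ⟨f, ⟨hcont, hbd⟩, ?_⟩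
  rw [Metric.tendsto_atTop]
  intro ε hε
  obtain ⟨N, hN⟩ := unif (ε/8) (by positivity)
  refine ⟨N, fun n hn => ?_⟩
  have hle : Znorm T (fun t => fn n t - f t) ≤ ε/2 := by
    rw [Znorm_eq]
    refine ciSup_le fun t => ?_
    have h1 := J_le_two_norm (fn n t.1 - f t.1)
    have h2 := hN n hn t.1 t.2
    linarith
  have hge : 0 ≤ Znorm T (fun t => fn n t - f t) := by
    rw [Znorm_eq]
    exact Real.iSup_nonneg fun t => J_nonneg _
  rw [Real.dist_eq, abs_of_nonneg (by simpa using hge)]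
  simpa using lt_of_le_of_lt hle (by linarith)
end

section
/- Let E be a finite set with n elements, T > 0 and C > 0. Let Q¹, Q² : [0,T] → (E × E → ℝ) be measurable with |Qⁱ(t)(e',e)| ≤ C for all i ∈ {1,2}, t ∈ [0,T], and e, e' ∈ E. Suppose p¹, p² : [0,T] → (E → ℝ) are continuously differentiable, satisfy the Kolmogorov forward equations d/dt pⁱ(t)(e) = Σ_{e'∈E} pⁱ(t)(e') Qⁱ(t)(e',e) for all e ∈ E, share the same initial condition p¹(0) = p²(0), and satisfy |pⁱ(t)(e)| ≤ 1 for all t and e. Then for every s ∈ [0,T]: Σ_{e∈E} |p¹(s)(e) − p²(s)(e)| ≤ e^{nCs} ∫₀ˢ Σ_{e,e'∈E} |Q¹(t)(e',e) − Q²(t)(e',e)| dt. -/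
open MeasureTheory

/-- Grönwall stability estimate for the Kolmogorov forward (KFP) equation with
respect to the transition-rate matrix: two continuously differentiable solutions of
`d/dt pⁱ(t)(e) = Σ_{e'} pⁱ(t)(e') Qⁱ(t)(e',e)` with the same initial condition and values
bounded by 1 satisfy
`Σ_e |p¹(s)(e) − p²(s)(e)| ≤ e^{nCs} ∫₀ˢ Σ_{e,e'} |Q¹(t)(e',e) − Q²(t)(e',e)| dt`,
where `n` is the number of states and `C` bounds the entries of the rate matrices. -/
theorem kolmogorov_gronwall_stability
    {E : Type*} [Fintype E] (n : ℕ) (hn : n = Fintype.card E)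
    (T C : ℝ) (hT : 0 < T) (hC : 0 < C)
    (Q1 Q2 : ℝ → E → E → ℝ)
    (hQ1meas : ∀ e e', Measurable fun t => Q1 t e' e)
    (hQ2meas : ∀ e e', Measurable fun t => Q2 t e' e)
    (hQ1bd : ∀ t ∈ Set.Icc (0:ℝ) T, ∀ e e' : E, |Q1 t e' e| ≤ C)
    (hQ2bd : ∀ t ∈ Set.Icc (0:ℝ) T, ∀ e e' : E, |Q2 t e' e| ≤ C)
    (p1 p2 : ℝ → E → ℝ)
    (hp1C1 : ∀ e, ContDiffOn ℝ 1 (fun t => p1 t e) (Set.Icc 0 T))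
    (hp2C1 : ∀ e, ContDiffOn ℝ 1 (fun t => p2 t e) (Set.Icc 0 T))
    (hode1 : ∀ e : E, ∀ t ∈ Set.Icc (0:ℝ) T,
      HasDerivAt (fun s => p1 s e) (∑ e' : E, p1 t e' * Q1 t e' e) t)
    (hode2 : ∀ e : E, ∀ t ∈ Set.Icc (0:ℝ) T,
      HasDerivAt (fun s => p2 s e) (∑ e' : E, p2 t e' * Q2 t e' e) t)
    (hinit : p1 0 = p2 0)
    (hbd1 : ∀ t ∈ Set.Icc (0:ℝ) T, ∀ e : E, |p1 t e| ≤ 1)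
    (hbd2 : ∀ t ∈ Set.Icc (0:ℝ) T, ∀ e : E, |p2 t e| ≤ 1)
    (s : ℝ) (hs : s ∈ Set.Icc (0:ℝ) T) :
    ∑ e : E, |p1 s e - p2 s e|
      ≤ Real.exp ((n : ℝ) * C * s)
        * ∫ t in Set.Icc (0:ℝ) s, ∑ e : E, ∑ e' : E, |Q1 t e' e - Q2 t e' e| := by
  subst hn
  rcases isEmpty_or_nonempty E with hE | hE
  · simp
  obtain ⟨hs0, hsT⟩ := hs
  have hnpos : (0:ℝ) < (Fintype.card E : ℝ) := by exact_mod_cast Fintype.card_pos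
  set K : ℝ := (Fintype.card E : ℝ) * C with hKdef
  have hK : 0 < K := mul_pos hnpos hC
  -- continuity of the solutions
  have hc1 : ∀ e, ContinuousOn (fun t => p1 t e) (Set.Icc 0 T) :=
    fun e t ht => (hode1 e t ht).continuousAt.continuousWithinAt
  have hc2 : ∀ e, ContinuousOn (fun t => p2 t e) (Set.Icc 0 T) :=
    fun e t ht => (hode2 e t ht).continuousAt.continuousWithinAt
  set φ : ℝ → ℝ := fun t => ∑ e : E, |p1 t e - p2 t e| with hφdef
  have hφcont : ContinuousOn φ (Set.Icc 0 T) := by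
    apply continuousOn_finset_sum
    intro e _
    exact ((hc1 e).sub (hc2 e)).abs
  have hφnn : ∀ t, 0 ≤ φ t := fun t => Finset.sum_nonneg fun e _ => abs_nonneg _
  set δe : E → ℝ → ℝ := fun e t => ∑ e' : E, |Q1 t e' e - Q2 t e' e| with hδedef
  set δf : ℝ → ℝ := fun t => ∑ e : E, δe e t with hδdef
  have hδemeas : ∀ e, Measurable (δe e) := by
    intro e
    apply Finset.measurable_sum
    intro e' _
    exact ((hQ1meas e e').sub (hQ2meas e e')).abs
  have hδenn : ∀ e t, 0 ≤ δe e t := fun e t => Finset.sum_nonneg fun e' _ => abs_nonneg _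
  have hδnn : ∀ t, 0 ≤ δf t := fun t => Finset.sum_nonneg fun e _ => hδenn e t
  have hδebd : ∀ e, ∀ t ∈ Set.Icc (0:ℝ) T, δe e t ≤ 2 * C * (Fintype.card E : ℝ) := by
    intro e t ht
    calc δe e t ≤ ∑ _e' : E, (2*C) := by
          apply Finset.sum_le_sum
          intro e' _
          calc |Q1 t e' e - Q2 t e' e| ≤ |Q1 t e' e| + |Q2 t e' e| := abs_sub _ _
            _ ≤ C + C := add_le_add (hQ1bd t ht e e') (hQ2bd t ht e e')
            _ = 2*C := by ring
      _ = 2 * C * (Fintype.card E : ℝ) := by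
          simp [Finset.sum_const, Finset.card_univ, mul_comm]
  have hδeint : ∀ e, IntegrableOn (δe e) (Set.Icc 0 T) := by
    intro e
    apply Measure.integrableOn_of_bounded (M := 2 * C * (Fintype.card E : ℝ))
      measure_Icc_lt_top.ne (hδemeas e).aestronglyMeasurable
    filter_upwards [ae_restrict_mem measurableSet_Icc] with t ht
    rw [Real.norm_eq_abs, abs_of_nonneg (hδenn e t)]
    exact hδebd e t ht
  have hδfint : IntegrableOn δf (Set.Icc 0 T) := by
    rw [hδdef]
    exact integrable_finset_sum _ fun e _ => hδeint e
  have hIccsub : ∀ t ∈ Set.Icc (0:ℝ) s, Set.uIcc (0:ℝ) t ⊆ Set.Icc 0 T := by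
    intro t ht
    rw [Set.uIcc_of_le ht.1]
    exact Set.Icc_subset_Icc le_rfl (ht.2.trans hsT)
  have hδeii : ∀ e, ∀ t ∈ Set.Icc (0:ℝ) s, IntervalIntegrable (δe e) volume 0 t :=
    fun e t ht => ((hδeint e).mono_set (hIccsub t ht)).intervalIntegrable
  have hδfii : ∀ t ∈ Set.Icc (0:ℝ) s, IntervalIntegrable δf volume 0 t :=
    fun t ht => (hδfint.mono_set (hIccsub t ht)).intervalIntegrable
  have hφii : ∀ t ∈ Set.Icc (0:ℝ) s, IntervalIntegrable φ volume 0 t :=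
    fun t ht => (hφcont.mono (hIccsub t ht)).intervalIntegrable
  -- the difference of drifts
  set g : E → ℝ → ℝ := fun e r =>
    (∑ e' : E, p1 r e' * Q1 r e' e) - ∑ e' : E, p2 r e' * Q2 r e' e with hgdef
  have hgint : ∀ e, IntegrableOn (g e) (Set.Icc 0 T) := by
    intro e
    refine ⟨?_, HasFiniteIntegral.restrict_of_bounded (C := 2 * (Fintype.card E : ℝ) * C)
      measure_Icc_lt_top ?_⟩
    · apply AEStronglyMeasurable.sub
      · apply Finset.aestronglyMeasurable_fun_sum
        intro e' _
        exact ((hc1 e').aestronglyMeasurable measurableSet_Icc).mul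
          ((hQ1meas e e').aestronglyMeasurable.restrict)
      · apply Finset.aestronglyMeasurable_fun_sum
        intro e' _
        exact ((hc2 e').aestronglyMeasurable measurableSet_Icc).mul
          ((hQ2meas e e').aestronglyMeasurable.restrict)
    · filter_upwards [ae_restrict_mem measurableSet_Icc] with t ht
      have h1 : |∑ e' : E, p1 t e' * Q1 t e' e| ≤ (Fintype.card E : ℝ) * C := by
        calc |∑ e' : E, p1 t e' * Q1 t e' e| ≤ ∑ e' : E, |p1 t e' * Q1 t e' e| :=
              Finset.abs_sum_le_sum_abs _ _
          _ ≤ ∑ _e' : E, C := by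
              apply Finset.sum_le_sum
              intro e' _
              rw [abs_mul]
              calc |p1 t e'| * |Q1 t e' e| ≤ 1 * C :=
                    mul_le_mul (hbd1 t ht e') (hQ1bd t ht e e') (abs_nonneg _) zero_le_one
                _ = C := one_mul C
          _ = (Fintype.card E : ℝ) * C := by
              simp [Finset.sum_const, Finset.card_univ, mul_comm]
      have h2 : |∑ e' : E, p2 t e' * Q2 t e' e| ≤ (Fintype.card E : ℝ) * C := by
        calc |∑ e' : E, p2 t e' * Q2 t e' e| ≤ ∑ e' : E, |p2 t e' * Q2 t e' e| :=
              Finset.abs_sum_le_sum_abs _ _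
          _ ≤ ∑ _e' : E, C := by
              apply Finset.sum_le_sum
              intro e' _
              rw [abs_mul]
              calc |p2 t e'| * |Q2 t e' e| ≤ 1 * C :=
                    mul_le_mul (hbd2 t ht e') (hQ2bd t ht e e') (abs_nonneg _) zero_le_one
                _ = C := one_mul C
          _ = (Fintype.card E : ℝ) * C := by
              simp [Finset.sum_const, Finset.card_univ, mul_comm]
      rw [Real.norm_eq_abs]
      calc |g e t| ≤ |∑ e' : E, p1 t e' * Q1 t e' e| + |∑ e' : E, p2 t e' * Q2 t e' e| :=
            abs_sub _ _
        _ ≤ (Fintype.card E : ℝ) * C + (Fintype.card E : ℝ) * C := add_le_add h1 h2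
        _ = 2 * (Fintype.card E : ℝ) * C := by ring
  -- fundamental theorem of calculus
  have key : ∀ t ∈ Set.Icc (0:ℝ) s, ∀ e : E, p1 t e - p2 t e = ∫ r in (0:ℝ)..t, g e r := by
    intro t ht e
    have h := intervalIntegral.integral_eq_sub_of_hasDerivAt
      (f := fun r => p1 r e - p2 r e) (f' := g e)
      (fun r hr => ((hode1 e r (hIccsub t ht hr)).sub (hode2 e r (hIccsub t ht hr))))
      (((hgint e).mono_set (hIccsub t ht)).intervalIntegrable)
    have h0 : p1 0 e = p2 0 e := congrFun hinit e
    rw [h]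
    simp [h0]
  -- pointwise bound on the drift difference
  have hgbd : ∀ r ∈ Set.Icc (0:ℝ) T, ∀ e : E, |g e r| ≤ C * φ r + δe e r := by
    intro r hr e
    have hsplit : g e r = ∑ e' : E,
        ((p1 r e' - p2 r e') * Q1 r e' e + p2 r e' * (Q1 r e' e - Q2 r e' e)) := by
      rw [hgdef]
      simp only [← Finset.sum_sub_distrib]
      apply Finset.sum_congr rfl
      intro e' _
      ring
    rw [hsplit]
    calc |∑ e' : E, ((p1 r e' - p2 r e') * Q1 r e' e + p2 r e' * (Q1 r e' e - Q2 r e' e))|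
        ≤ ∑ e' : E, |(p1 r e' - p2 r e') * Q1 r e' e + p2 r e' * (Q1 r e' e - Q2 r e' e)| :=
          Finset.abs_sum_le_sum_abs _ _
      _ ≤ ∑ e' : E, (C * |p1 r e' - p2 r e'| + |Q1 r e' e - Q2 r e' e|) := by
          apply Finset.sum_le_sum
          intro e' _
          calc |(p1 r e' - p2 r e') * Q1 r e' e + p2 r e' * (Q1 r e' e - Q2 r e' e)|
              ≤ |(p1 r e' - p2 r e') * Q1 r e' e| + |p2 r e' * (Q1 r e' e - Q2 r e' e)| :=
                abs_add_le _ _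
            _ ≤ C * |p1 r e' - p2 r e'| + |Q1 r e' e - Q2 r e' e| := by
                rw [abs_mul, abs_mul]
                apply add_le_add
                · rw [mul_comm]
                  exact mul_le_mul_of_nonneg_right (hQ1bd r hr e e') (abs_nonneg _)
                · calc |p2 r e'| * |Q1 r e' e - Q2 r e' e| ≤ 1 * |Q1 r e' e - Q2 r e' e| :=
                      mul_le_mul_of_nonneg_right (hbd2 r hr e') (abs_nonneg _)
                    _ = _ := one_mul _
      _ = C * φ r + δe e r := by
          rw [Finset.sum_add_distrib, ← Finset.mul_sum, hφdef, hδedef]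
  -- the integral inequality
  set a : ℝ := ∫ r in (0:ℝ)..s, δf r with hadef
  have ha_nn : 0 ≤ a := intervalIntegral.integral_nonneg hs0 fun r _ => hδnn r
  set H : ℝ → ℝ := fun t => ∫ r in (0:ℝ)..t, φ r with hHdef
  have step : ∀ t ∈ Set.Icc (0:ℝ) s, φ t ≤ K * H t + a := by
    intro t ht
    have hIccT : Set.Icc (0:ℝ) t ⊆ Set.Icc 0 T := by
      rw [← Set.uIcc_of_le ht.1]; exact hIccsub t ht
    have hgii : ∀ e : E, IntervalIntegrable (g e) volume 0 t :=
      fun e => ((hgint e).mono_set (hIccsub t ht)).intervalIntegrable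
    have hbound_ii : ∀ e : E, IntervalIntegrable (fun r => C * φ r + δe e r) volume 0 t :=
      fun e => ((hφii t ht).const_mul C).add (hδeii e t ht)
    have h1 : φ t ≤ ∑ e : E, ∫ r in (0:ℝ)..t, (C * φ r + δe e r) := by
      calc φ t = ∑ e : E, |∫ r in (0:ℝ)..t, g e r| := by
            rw [hφdef]
            apply Finset.sum_congr rfl
            intro e _
            rw [key t ht e]
        _ ≤ ∑ e : E, ∫ r in (0:ℝ)..t, |g e r| := by
            apply Finset.sum_le_sum
            intro e _
            exact intervalIntegral.abs_integral_le_integral_abs ht.1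
        _ ≤ ∑ e : E, ∫ r in (0:ℝ)..t, (C * φ r + δe e r) := by
            apply Finset.sum_le_sum
            intro e _
            apply intervalIntegral.integral_mono_on ht.1 (hgii e).abs (hbound_ii e)
            intro r hr
            exact hgbd r (hIccT hr) e
    have h2 : ∑ e : E, ∫ r in (0:ℝ)..t, (C * φ r + δe e r)
        = K * H t + ∫ r in (0:ℝ)..t, δf r := by
      rw [← intervalIntegral.integral_finset_sum (fun e _ => hbound_ii e)]
      have : ∀ r, ∑ e : E, (C * φ r + δe e r) = K * φ r + δf r := by
        intro r
        rw [Finset.sum_add_distrib, Finset.sum_const, Finset.card_univ]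
        simp only [nsmul_eq_mul, hKdef, hδdef]
        ring
      simp_rw [this]
      rw [intervalIntegral.integral_add ((hφii t ht).const_mul K) (hδfii t ht),
        intervalIntegral.integral_const_mul]
    have h3 : ∫ r in (0:ℝ)..t, δf r ≤ a := by
      rw [hadef]
      exact intervalIntegral.integral_mono_interval le_rfl ht.1 ht.2
        (Filter.Eventually.of_forall fun r => hδnn r) (hδfii s ⟨hs0, le_rfl⟩)
    calc φ t ≤ ∑ e : E, ∫ r in (0:ℝ)..t, (C * φ r + δe e r) := h1
      _ = K * H t + ∫ r in (0:ℝ)..t, δf r := h2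
      _ ≤ K * H t + a := by linarith
  -- Grönwall
  have hHnn : ∀ t ∈ Set.Icc (0:ℝ) s, 0 ≤ H t := by
    intro t ht
    exact intervalIntegral.integral_nonneg ht.1 fun r _ => hφnn r
  have hHcont : ContinuousOn H (Set.Icc 0 s) := by
    have := intervalIntegral.continuousOn_primitive_interval
      (f := φ) (a := (0:ℝ)) (b := s) (μ := volume) ?_
    · rwa [Set.uIcc_of_le hs0] at this
    · rw [Set.uIcc_of_le hs0]
      exact hφcont.mono (Set.Icc_subset_Icc le_rfl hsT) |>.integrableOn_compact isCompact_Icc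
  have hH' : ∀ t ∈ Set.Ico (0:ℝ) s, HasDerivWithinAt H (φ t) (Set.Ici t) t := by
    intro t ht
    have htT : t ∈ Set.Ico (0:ℝ) T := ⟨ht.1, lt_of_lt_of_le ht.2 hsT⟩
    have hmem : Set.Icc (0:ℝ) T ∈ nhdsWithin t (Set.Ioi t) := Icc_mem_nhdsGT_of_mem htT
    apply intervalIntegral.integral_hasDerivWithinAt_right (hφii t ⟨ht.1, ht.2.le⟩)
      ⟨Set.Icc 0 T, hmem, hφcont.aestronglyMeasurable measurableSet_Icc⟩
    exact (hφcont t ⟨ht.1, ht.2.le.trans hsT⟩).mono_of_mem_nhdsWithin hmem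
  have gron := norm_le_gronwallBound_of_norm_deriv_right_le (f := H) (f' := φ)
    (δ := 0) (K := K) (ε := a) (a := 0) (b := s) hHcont hH'
    (by simp [hHdef]) ?_ s (Set.right_mem_Icc.2 hs0)
  · have hHs : H s ≤ a / K * (Real.exp (K * s) - 1) := by
      rw [Real.norm_eq_abs, abs_of_nonneg (hHnn s (Set.right_mem_Icc.2 hs0)),
        gronwallBound_of_K_ne_0 hK.ne'] at gron
      simpa using gron
    have hfinal : φ s ≤ a * Real.exp (K * s) := by
      have h1 := step s (Set.right_mem_Icc.2 hs0)
      have h2 : K * H s ≤ a * (Real.exp (K * s) - 1) := by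
        calc K * H s ≤ K * (a / K * (Real.exp (K * s) - 1)) :=
              mul_le_mul_of_nonneg_left hHs hK.le
          _ = a * (Real.exp (K * s) - 1) := by field_simp
      linarith
    have hIcc_eq : (∫ t in Set.Icc (0:ℝ) s, δf t) = a := by
      rw [hadef, intervalIntegral.integral_of_le hs0, integral_Icc_eq_integral_Ioc]
    calc ∑ e : E, |p1 s e - p2 s e| = φ s := rfl
      _ ≤ a * Real.exp (K * s) := hfinal
      _ = Real.exp ((Fintype.card E : ℝ) * C * s) * ∫ t in Set.Icc (0:ℝ) s, δf t := by
          rw [hIcc_eq, hKdef, mul_comm]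
  · intro t ht
    rw [Real.norm_eq_abs, Real.norm_eq_abs, abs_of_nonneg (hφnn t),
      abs_of_nonneg (hHnn t ⟨ht.1, ht.2.le⟩)]
    exact step t ⟨ht.1, ht.2.le⟩
end
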